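/- arXiv:2407.17058 — 2 statements merged into one kernel-verified Lean document; each statement's English description precedes it below -/
import Mathlib

section
/- Let h: ℝ → ℝ be continuously differentiable with h(0) = 0, h'(0) > 0, and h(t) ≠ 0 for all t ≠ 0 in [−ε, ε] with ε > 0. Then lim_{α→∞} ∫_{−ε}^{ε} (α/2)·exp(−α·|h(t)|) dt = 1 / h'(0). -/
open Filter MeasureTheory Real Set Topology

/-! The substitution t = s / α turns the integral into `∫ ½ exp (-α |h (s / α)|) ds` over
`[-α ε, α ε]`. Since `α h (s / α) = s · dslope h 0 (s / α) → h'(0) s`, dominated convergence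
gives the limit `∫ ½ exp (-h'(0) |s|) ds = 1 / h'(0)`. The dominating function `exp (-k |s|)`
comes from `k |t| ≤ |h t|` on `[-ε, ε]`: the difference quotient `dslope h 0` is continuous and
nonvanishing on this compact interval, hence bounded away from zero. -/

lemma integrable_exp_neg_mul_abs {c : ℝ} (hc : 0 < c) :
    Integrable fun s : ℝ => exp (-c * |s|) := by
  rw [← integrableOn_univ, ← Iic_union_Ioi (a := 0)]
  refine IntegrableOn.union ?_ ?_
  · refine (integrableOn_exp_mul_Iic hc 0).congr_fun (fun s hs => ?_) measurableSet_Iic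
    rw [abs_of_nonpos hs, neg_mul_neg]
  · refine (integrableOn_exp_mul_Ioi (neg_neg_of_pos hc) 0).congr_fun (fun s hs => ?_)
      measurableSet_Ioi
    rw [abs_of_pos hs]

lemma integral_exp_neg_mul_abs {c : ℝ} (hc : 0 < c) : ∫ s : ℝ, exp (-c * |s|) = 2 / c := by
  rw [integral_comp_abs (f := fun x => exp (-c * x)), integral_exp_mul_Ioi (neg_neg_of_pos hc)]
  field_simp
  simp

lemma IsCompact.exists_pos_le_norm {X E : Type*} [TopologicalSpace X] [NormedAddCommGroup E]
    {K : Set X} {g : X → E} (hK : IsCompact K) (hg : ContinuousOn g K)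
    (hne : ∀ x ∈ K, g x ≠ 0) : ∃ m > 0, ∀ x ∈ K, m ≤ ‖g x‖ := by
  rcases K.eq_empty_or_nonempty with rfl | hK₀
  · exact ⟨1, one_pos, by simp⟩
  obtain ⟨x₀, hx₀, hmin⟩ := hK.exists_isMinOn hK₀ hg.norm
  exact ⟨‖g x₀‖, norm_pos_iff.2 (hne x₀ hx₀), fun x hx => hmin hx⟩

lemma mul_dslope_zero {h : ℝ → ℝ} (h0 : h 0 = 0) (t : ℝ) : t * dslope h 0 t = h t := by
  simpa [h0] using sub_smul_dslope h 0 t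

lemma exists_pos_mul_abs_le_abs {h : ℝ → ℝ} {ε : ℝ} (hε : 0 < ε)
    (hcont : ContinuousOn h (Icc (-ε) ε)) (hdiff : DifferentiableAt ℝ h 0) (h0 : h 0 = 0)
    (hd : deriv h 0 ≠ 0) (hne : ∀ t ∈ Icc (-ε) ε, t ≠ 0 → h t ≠ 0) :
    ∃ k > 0, ∀ t ∈ Icc (-ε) ε, k * |t| ≤ |h t| := by
  have hslope : ContinuousOn (dslope h 0) (Icc (-ε) ε) :=
    (continuousOn_dslope (Icc_mem_nhds (neg_neg_of_pos hε) hε)).2 ⟨hcont, hdiff⟩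
  have hslope_ne : ∀ t ∈ Icc (-ε) ε, dslope h 0 t ≠ 0 := by
    intro t ht
    rcases eq_or_ne t 0 with rfl | ht0
    · rwa [dslope_same]
    · exact right_ne_zero_of_mul (mul_dslope_zero h0 t ▸ hne t ht ht0)
  obtain ⟨k, hk, hkle⟩ := isCompact_Icc.exists_pos_le_norm hslope hslope_ne
  refine ⟨k, hk, fun t ht => ?_⟩
  calc k * |t| ≤ |dslope h 0 t| * |t| := mul_le_mul_of_nonneg_right (hkle t ht) (abs_nonneg t)
    _ = |h t| := by rw [← abs_mul, mul_comm, mul_dslope_zero h0]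

lemma tendsto_mul_comp_div_atTop {h : ℝ → ℝ} (hdiff : DifferentiableAt ℝ h 0)
    (h0 : h 0 = 0) (s : ℝ) : Tendsto (fun α => α * h (s / α)) atTop (𝓝 (deriv h 0 * s)) := by
  have hlim : Tendsto (fun α => dslope h 0 (s / α)) atTop (𝓝 (deriv h 0)) := by
    rw [← dslope_same]
    exact (continuousAt_dslope_same.2 hdiff).tendsto.comp
      (tendsto_const_nhds.div_atTop tendsto_id)
  refine (hlim.mul_const s).congr' ?_
  filter_upwards [eventually_ne_atTop 0] with α hα
  rw [← mul_dslope_zero h0 (s / α)]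
  field_simp

lemma smul_setIntegral_eq_integral_indicator_comp_div {E : Type*} [NormedAddCommGroup E]
    [NormedSpace ℝ E] (f : ℝ → E) {S : Set ℝ} (hS : MeasurableSet S) {α : ℝ} (hα : 0 < α) :
    α • ∫ t in S, f t = ∫ s, S.indicator f (s / α) := by
  rw [Measure.integral_comp_div, integral_indicator hS, abs_of_pos hα]

lemma tendsto_integral_indicator_comp_div {h : ℝ → ℝ} {ε k : ℝ} (hε : 0 < ε)
    (hm : Measurable h) (hdiff : DifferentiableAt ℝ h 0) (h0 : h 0 = 0) (hk : 0 < k)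
    (hkh : ∀ t ∈ Icc (-ε) ε, k * |t| ≤ |h t|) :
    Tendsto (fun α => ∫ s, (Icc (-ε) ε).indicator (fun t => exp (-α * |h t|)) (s / α))
      atTop (𝓝 (∫ s, exp (-|deriv h 0| * |s|))) := by
  refine tendsto_integral_filter_of_dominated_convergence (fun s => exp (-k * |s|)) ?_ ?_
    (integrable_exp_neg_mul_abs hk) (ae_of_all _ fun s => ?_)
  · exact Eventually.of_forall fun α =>
      (((by fun_prop : Measurable fun t => exp (-α * |h t|)).indicator
        measurableSet_Icc).comp (measurable_id.div_const α)).aestronglyMeasurable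
  · filter_upwards [eventually_gt_atTop 0] with α hα
    refine ae_of_all _ fun s => ?_
    by_cases hs : s / α ∈ Icc (-ε) ε
    · rw [indicator_of_mem hs, norm_of_nonneg (exp_pos _).le, exp_le_exp]
      have hlower := hkh _ hs
      rw [abs_div, abs_of_pos hα, mul_div_assoc', div_le_iff₀ hα] at hlower
      linarith
    · rw [indicator_of_notMem hs, norm_zero]
      exact (exp_pos _).le
  · have hmem : ∀ᶠ α in atTop, s / α ∈ Icc (-ε) ε :=
      (tendsto_const_nhds.div_atTop tendsto_id).eventually
        (Icc_mem_nhds (neg_neg_of_pos hε) hε)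
    have hexp : Tendsto (fun α => exp (-|α * h (s / α)|)) atTop
        (𝓝 (exp (-|deriv h 0| * |s|))) := by
      rw [neg_mul, ← abs_mul]
      exact (continuous_exp.tendsto _).comp (tendsto_mul_comp_div_atTop hdiff h0 s).abs.neg
    refine hexp.congr' ?_
    filter_upwards [hmem, eventually_gt_atTop 0] with α hα hα₀
    rw [indicator_of_mem hα, abs_mul, abs_of_pos hα₀, neg_mul]

theorem delta_composition_one_dim (h : ℝ → ℝ) (ε : ℝ) (hε : 0 < ε)
    (hC1 : ContDiff ℝ 1 h) (h0 : h 0 = 0) (hd : 0 < deriv h 0)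
    (hne : ∀ t ∈ Set.Icc (-ε) ε, t ≠ 0 → h t ≠ 0) :
    Tendsto (fun α : ℝ => ∫ t in Set.Icc (-ε) ε, α / 2 * Real.exp (-α * |h t|))
      atTop (nhds (1 / deriv h 0)) := by
  have hdiff : DifferentiableAt ℝ h 0 := (hC1.differentiable one_ne_zero).differentiableAt
  obtain ⟨k, hk, hkh⟩ :=
    exists_pos_mul_abs_le_abs hε hC1.continuous.continuousOn hdiff h0 hd.ne' hne
  have hlim := (tendsto_integral_indicator_comp_div hε hC1.continuous.measurable hdiff h0 hk
    hkh).div_const 2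
  rw [abs_of_pos hd, integral_exp_neg_mul_abs hd, div_div_cancel_left' two_ne_zero,
    ← one_div] at hlim
  refine hlim.congr' ?_
  filter_upwards [eventually_gt_atTop 0] with α hα
  rw [← smul_setIntegral_eq_integral_indicator_comp_div _ measurableSet_Icc hα, smul_eq_mul,
    integral_const_mul]
  ring
end

section
/- Let f: ℝⁿ → ℝ be the signed distance function of a nonempty closed set S = {x : f(x) = 0}, i.e., |f(x)| = dist(x, S) for all x. If f is differentiable at a point p with ‖∇f(p)‖ = 1, then x* = p − f(p)∇f(p) is a closest point to p on S. -/
set_option maxHeartbeats 1000000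


open Metric

theorem sdf_pull_closest_point (n : ℕ) (f : EuclideanSpace ℝ (Fin n) → ℝ)
    (hS : {x : EuclideanSpace ℝ (Fin n) | f x = 0}.Nonempty)
    (hsdf : ∀ x, |f x| = Metric.infDist x {y : EuclideanSpace ℝ (Fin n) | f y = 0})
    (p : EuclideanSpace ℝ (Fin n)) (hdiff : DifferentiableAt ℝ f p)
    (hgrad : ‖gradient f p‖ = 1) :
    f (p - f p • gradient f p) = 0 ∧
    dist p (p - f p • gradient f p) =
      Metric.infDist p {y : EuclideanSpace ℝ (Fin n) | f y = 0} := by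
  set S := {x : EuclideanSpace ℝ (Fin n) | f x = 0} with hSdef
  by_cases hd0 : f p = 0
  · have h0 : Metric.infDist p S = 0 := by rw [← hsdf p, hd0, abs_zero]
    constructor
    · simpa [hd0] using hd0
    · simp [hd0, h0]
  set d := f p with hd
  set u := gradient f p with hu
  obtain ⟨q, hqmem, hq⟩ := IsClosed.exists_infDist_eq_dist isClosed_closure hS.closure p
  have hdist_pq : dist p q = |d| := by
    rw [← hq, Metric.infDist_closure, ← hsdf p]
  have habs : (0:ℝ) < |d| := abs_pos.mpr hd0
  set v := |d|⁻¹ • (q - p) with hv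
  have hnqp : ‖q - p‖ = |d| := by rw [← dist_eq_norm', hdist_pq]
  have hvnorm : ‖v‖ = 1 := by
    rw [hv, norm_smul, hnqp, Real.norm_eq_abs, abs_inv, abs_abs,
      inv_mul_cancel₀ habs.ne']
  have hqv : q = p + |d| • v := by
    rw [hv, smul_smul, mul_inv_cancel₀ habs.ne', one_smul]
    abel
  have key : ∀ t : ℝ, 0 ≤ t → t ≤ |d| → |f (p + t • v)| = |d| - t := by
    intro t ht htle
    have hub : Metric.infDist (p + t • v) S ≤ |d| - t := by
      have h1 : Metric.infDist (p + t • v) S ≤ dist (p + t • v) q := by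
        rw [← Metric.infDist_closure]; exact Metric.infDist_le_dist_of_mem hqmem
      have h2 : dist (p + t • v) q = |d| - t := by
        have hdiffpt : (p + t • v) - (p + |d| • v) = (t - |d|) • v := by
          rw [sub_smul]; abel
        rw [hqv, dist_eq_norm, hdiffpt, norm_smul, hvnorm, mul_one,
          Real.norm_eq_abs, abs_of_nonpos (by linarith)]
        ring
      linarith
    have hlb : |d| - t ≤ Metric.infDist (p + t • v) S := by
      have h3 := Metric.infDist_le_infDist_add_dist (x := p) (y := p + t • v) (s := S)
      have hdp : dist p (p + t • v) = t := by
        rw [dist_eq_norm]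
        have : p - (p + t • v) = -(t • v) := by abel
        rw [this, norm_neg, norm_smul, hvnorm, mul_one, Real.norm_eq_abs,
          abs_of_nonneg ht]
      rw [← hsdf p, hdp] at h3
      have : |f p| = |d| := by rw [← hd]
      linarith [this ▸ h3]
    rw [hsdf]
    linarith
  set s : ℝ := if 0 < d then 1 else -1 with hs
  have hsd : s * |d| = d := by
    rcases lt_trichotomy d 0 with h | h | h
    · simp [hs, h.not_gt, abs_of_neg h]
    · exact absurd h hd0
    · simp [hs, h, abs_of_pos h]
  have hss : s * s = 1 := by
    rcases lt_or_ge 0 d with h | h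
    · simp [hs, h]
    · simp [hs, not_lt.mpr h]
  have hsabs : |s| = 1 := by
    rcases lt_or_ge 0 d with h | h
    · simp [hs, h]
    · simp [hs, not_lt.mpr h]
  -- continuity
  have hcontline : ContinuousAt (fun t : ℝ => p + t • v) 0 :=
    (continuous_const.add (continuous_id.smul continuous_const)).continuousAt
  have hcont : ContinuousAt (fun t : ℝ => f (p + t • v)) 0 := by
    have h' : ContinuousAt f ((fun t : ℝ => p + t • v) 0) := by
      simpa using hdiff.continuousAt
    have hcomp := ContinuousAt.comp (x := (0:ℝ)) h' hcontline
    exact hcomp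
  have hval : f (p + (0:ℝ) • v) = d := by simp [hd]
  have hev : ∀ᶠ t in nhds (0:ℝ), dist (f (p + t • v)) d < |d|/2 := by
    have htend := hcont.tendsto
    rw [hval] at htend
    exact Metric.tendsto_nhds.mp htend (|d|/2) (by positivity)
  have heq : (fun t : ℝ => f (p + t • v)) =ᶠ[nhdsWithin 0 (Set.Ici 0)]
      fun t => d - s * t := by
    have hmem : Set.Ico (0:ℝ) (|d|/2) ∈ nhdsWithin 0 (Set.Ici 0) :=
      Ico_mem_nhdsGE (by positivity)
    filter_upwards [hev.filter_mono nhdsWithin_le_nhds, hmem] with t hdistlt htmem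
    obtain ⟨ht0, htlt⟩ := htmem
    have habst : |f (p + t • v)| = |d| - t := key t ht0 (by linarith)
    have hdlt : |f (p + t • v) - d| < |d|/2 := by rwa [Real.dist_eq] at hdistlt
    have h1 := abs_lt.mp hdlt
    rcases lt_or_ge 0 d with hpos | hneg
    · have hsd1 : s = 1 := by simp [hs, hpos]
      have habsd : |d| = d := abs_of_pos hpos
      have hfx : 0 < f (p + t • v) := by
        have h1' := h1.1
        linarith
      rw [hsd1, one_mul]
      rw [abs_of_pos hfx] at habst
      rw [habst, habsd]
    · have hdneg : d < 0 := hneg.lt_of_ne hd0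
      have hsd1 : s = -1 := by simp [hs, not_lt.mpr hneg]
      have habsd : |d| = -d := abs_of_neg hdneg
      have hfx : f (p + t • v) < 0 := by
        have h1' := h1.2
        linarith
      rw [hsd1]
      rw [abs_of_neg hfx] at habst
      rw [habsd] at habst
      linarith
  -- derivative
  have hline : HasDerivAt (fun t : ℝ => p + t • v) v 0 := by
    simpa using ((hasDerivAt_id (0:ℝ)).smul_const v).const_add p
  have hfd' : HasFDerivAt f (fderiv ℝ f p) ((fun t : ℝ => p + t • v) 0) := by
    simpa using hdiff.hasFDerivAt
  have hfder : HasDerivAt (fun t : ℝ => f (p + t • v)) (fderiv ℝ f p v) 0 :=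
    hfd'.comp_hasDerivAt 0 hline
  have h1 : HasDerivWithinAt (fun t : ℝ => f (p + t • v)) (fderiv ℝ f p v)
      (Set.Ici 0) 0 := hfder.hasDerivWithinAt
  have hlin : HasDerivWithinAt (fun t : ℝ => d - s * t) (-s) (Set.Ici 0) 0 := by
    simpa using (((hasDerivAt_id (0:ℝ)).const_mul s).const_sub d).hasDerivWithinAt
  have h2 : HasDerivWithinAt (fun t : ℝ => f (p + t • v)) (-s) (Set.Ici 0) 0 :=
    hlin.congr_of_eventuallyEq heq (by simp [hd])
  have hud : UniqueDiffWithinAt ℝ (Set.Ici (0:ℝ)) 0 :=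
    uniqueDiffOn_Ici 0 0 Set.self_mem_Ici
  have hfv : fderiv ℝ f p v = -s := by
    rw [← h1.derivWithin hud, ← h2.derivWithin hud]
  have hinner : (inner ℝ u v : ℝ) = -s := by
    rw [← hfv, hdiff.hasGradientAt.hasFDerivAt.fderiv,
      InnerProductSpace.toDual_apply_apply]
  have hw : u = (-s) • v := by
    have hin1 : (inner ℝ u ((-s) • v) : ℝ) = 1 := by
      rw [real_inner_smul_right, hinner]
      nlinarith [hss]
    have hn2 : ‖(-s) • v‖ = 1 := by
      rw [norm_smul, hvnorm, mul_one, Real.norm_eq_abs, abs_neg, hsabs]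
    exact ((inner_eq_one_iff_of_norm_eq_one hgrad hn2).mp hin1)
  have hvu : v = (-s) • u := by
    rw [hw, smul_smul]
    have : (-s) * (-s) = 1 := by nlinarith [hss]
    rw [this, one_smul]
  have hq2 : q = p - d • u := by
    rw [hqv, hvu, smul_smul]
    have : |d| * (-s) = -d := by nlinarith [hsd]
    rw [this, neg_smul, ← sub_eq_add_neg]
  constructor
  · rw [← hq2]
    have h0 : Metric.infDist q S = 0 := by
      rw [← Metric.infDist_closure]; exact Metric.infDist_zero_of_mem hqmem
    exact abs_eq_zero.mp (by rw [hsdf q, h0])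
  · rw [← hq2, hdist_pq, hd]
    exact hsdf p
end
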